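/- Assume conditions (9). Define A(x,y) = n1·k1·(k1²n1² + e1·k1·n1 + 1)·x + e1·k1·n1·(k1·n1 + e1)·y − (k1·n1 + e1)·(k1²n1² + e1·k1·n1 + 1), B = n1·k1·(k1²n1² + e1·k1·n1 + 1)/e1, C = k1·n1·(k1·n1 + e1), and H(x,y) = A(x,y)·x^B·y^C. Then H is constant along every orbit of Z1 in the open first quadrant: if γ : I → ℝ² is differentiable on an open real interval I, takes values in (0,∞)×(0,∞), and satisfies γ'(t) = Z1(γ(t)) for all t ∈ I, then the function t ↦ H(γ(t)) is constant on I. (This is the paper's assertion that, under the center conditions, system (3) has a first integral and consequently no limit cycles.) -/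

import Mathlib

open Real

/-- The competitive resource–consumer system `Z1`. -/
noncomputable def Z1 (k1 n1 e1 p1 s1 w1 h1 : ℝ) (p : ℝ × ℝ) : ℝ × ℝ :=
  (p.1 * (k1 * (1 - n1 * p.1) - e1 * p.2 - w1),
   p.2 * (e1 * p1 * p.1 - s1 * p.2 - h1))

/-- The Darboux first integral `H(x,y) = A(x,y)·x^B·y^C` of the competitive system. -/
noncomputable def Hfun (k1 n1 e1 x y : ℝ) : ℝ :=
  (n1 * k1 * (k1 ^ 2 * n1 ^ 2 + e1 * k1 * n1 + 1) * x
      + e1 * k1 * n1 * (k1 * n1 + e1) * y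
      - (k1 * n1 + e1) * (k1 ^ 2 * n1 ^ 2 + e1 * k1 * n1 + 1))
    * x ^ (n1 * k1 * (k1 ^ 2 * n1 ^ 2 + e1 * k1 * n1 + 1) / e1)
    * y ^ (k1 * n1 * (k1 * n1 + e1))

lemma hasDerivAt_fst' {γ : ℝ → ℝ × ℝ} {v : ℝ × ℝ} {t : ℝ} (h : HasDerivAt γ v t) :
    HasDerivAt (fun s => (γ s).1) v.1 t := by
  exact (hasFDerivAt_fst (𝕜 := ℝ) (p := γ t)).comp_hasDerivAt t h

lemma hasDerivAt_snd' {γ : ℝ → ℝ × ℝ} {v : ℝ × ℝ} {t : ℝ} (h : HasDerivAt γ v t) :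
    HasDerivAt (fun s => (γ s).2) v.2 t := by
  exact (hasFDerivAt_snd (𝕜 := ℝ) (p := γ t)).comp_hasDerivAt t h

lemma const_on_Ioo {f : ℝ → ℝ} {a b t₁ t₂ : ℝ} (h₁ : t₁ ∈ Set.Ioo a b)
    (h₂ : t₂ ∈ Set.Ioo a b) (hle : t₁ ≤ t₂)
    (hd : ∀ t ∈ Set.Ioo a b, HasDerivAt f 0 t) : f t₁ = f t₂ := by
  have hsub : Set.Icc t₁ t₂ ⊆ Set.Ioo a b := fun x hx =>
    ⟨lt_of_lt_of_le h₁.1 hx.1, lt_of_le_of_lt hx.2 h₂.2⟩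
  have := constant_of_has_deriv_right_zero (f := f) (a := t₁) (b := t₂)
    (fun x hx => (hd x (hsub hx)).continuousAt.continuousWithinAt)
    (fun x hx => ((hd x (hsub (Set.Ico_subset_Icc_self hx))).hasDerivWithinAt))
  exact (this t₂ (Set.right_mem_Icc.2 hle)).symm

/-- Under conditions (9), `H` is constant along every orbit of `Z1` contained in the
open first quadrant; consequently system (3) has no limit cycles there. -/
theorem stmt4 (k1 n1 e1 p1 s1 w1 h1 : ℝ)
    (he : e1 ≠ 0)
    (hh : h1 = (k1 ^ 2 * n1 ^ 2 + e1 * k1 * n1 + 1) / e1)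
    (hp : p1 = (k1 ^ 2 * n1 ^ 2 + 1) / e1 ^ 2)
    (hs : s1 = -(k1 * n1))
    (hw : w1 = -(k1 * n1) - e1 + k1)
    (a b : ℝ) (γ : ℝ → ℝ × ℝ)
    (hpos : ∀ t ∈ Set.Ioo a b, 0 < (γ t).1 ∧ 0 < (γ t).2)
    (hode : ∀ t ∈ Set.Ioo a b, HasDerivAt γ (Z1 k1 n1 e1 p1 s1 w1 h1 (γ t)) t) :
    ∀ t₁ ∈ Set.Ioo a b, ∀ t₂ ∈ Set.Ioo a b,
      Hfun k1 n1 e1 (γ t₁).1 (γ t₁).2 = Hfun k1 n1 e1 (γ t₂).1 (γ t₂).2 := by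
  subst hh hp hs hw
  have hd : ∀ t ∈ Set.Ioo a b,
      HasDerivAt (fun s => Hfun k1 n1 e1 (γ s).1 (γ s).2) 0 t := by
    intro t ht
    obtain ⟨hx, hy⟩ := hpos t ht
    have h := hode t ht
    have hP : HasDerivAt (fun s => (γ s).1)
        ((γ t).1 * (k1 * (1 - n1 * (γ t).1) - e1 * (γ t).2 - (-(k1 * n1) - e1 + k1))) t :=
      hasDerivAt_fst' h
    have hQ : HasDerivAt (fun s => (γ s).2)
        ((γ t).2 * (e1 * ((k1 ^ 2 * n1 ^ 2 + 1) / e1 ^ 2) * (γ t).1 - -(k1 * n1) * (γ t).2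
          - (k1 ^ 2 * n1 ^ 2 + e1 * k1 * n1 + 1) / e1)) t :=
      hasDerivAt_snd' h
    have hA : HasDerivAt (fun s => n1 * k1 * (k1 ^ 2 * n1 ^ 2 + e1 * k1 * n1 + 1) * (γ s).1
        + e1 * k1 * n1 * (k1 * n1 + e1) * (γ s).2
        - (k1 * n1 + e1) * (k1 ^ 2 * n1 ^ 2 + e1 * k1 * n1 + 1))
        (n1 * k1 * (k1 ^ 2 * n1 ^ 2 + e1 * k1 * n1 + 1)
            * ((γ t).1 * (k1 * (1 - n1 * (γ t).1) - e1 * (γ t).2 - (-(k1 * n1) - e1 + k1)))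
         + e1 * k1 * n1 * (k1 * n1 + e1)
            * ((γ t).2 * (e1 * ((k1 ^ 2 * n1 ^ 2 + 1) / e1 ^ 2) * (γ t).1
                - -(k1 * n1) * (γ t).2 - (k1 ^ 2 * n1 ^ 2 + e1 * k1 * n1 + 1) / e1))) t :=
      ((hP.const_mul _).add (hQ.const_mul _)).sub_const _
    have hXB : HasDerivAt
        (fun s => (γ s).1 ^ (n1 * k1 * (k1 ^ 2 * n1 ^ 2 + e1 * k1 * n1 + 1) / e1))
        (((γ t).1 * (k1 * (1 - n1 * (γ t).1) - e1 * (γ t).2 - (-(k1 * n1) - e1 + k1)))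
          * (n1 * k1 * (k1 ^ 2 * n1 ^ 2 + e1 * k1 * n1 + 1) / e1)
          * (γ t).1 ^ (n1 * k1 * (k1 ^ 2 * n1 ^ 2 + e1 * k1 * n1 + 1) / e1 - 1)) t :=
      hP.rpow_const (Or.inl hx.ne')
    have hYC : HasDerivAt (fun s => (γ s).2 ^ (k1 * n1 * (k1 * n1 + e1)))
        (((γ t).2 * (e1 * ((k1 ^ 2 * n1 ^ 2 + 1) / e1 ^ 2) * (γ t).1 - -(k1 * n1) * (γ t).2
            - (k1 ^ 2 * n1 ^ 2 + e1 * k1 * n1 + 1) / e1))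
          * (k1 * n1 * (k1 * n1 + e1))
          * (γ t).2 ^ (k1 * n1 * (k1 * n1 + e1) - 1)) t :=
      hQ.rpow_const (Or.inl hy.ne')
    have hmain := (hA.mul hXB).mul hYC
    have hu : (γ t).1 ^ (n1 * k1 * (k1 ^ 2 * n1 ^ 2 + e1 * k1 * n1 + 1) / e1 - 1)
        = (γ t).1 ^ (n1 * k1 * (k1 ^ 2 * n1 ^ 2 + e1 * k1 * n1 + 1) / e1) / (γ t).1 :=
      Real.rpow_sub_one hx.ne' _
    have hv : (γ t).2 ^ (k1 * n1 * (k1 * n1 + e1) - 1)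
        = (γ t).2 ^ (k1 * n1 * (k1 * n1 + e1)) / (γ t).2 :=
      Real.rpow_sub_one hy.ne' _
    rw [hu, hv] at hmain
    have hzero : ((n1 * k1 * (k1 ^ 2 * n1 ^ 2 + e1 * k1 * n1 + 1)
            * ((γ t).1 * (k1 * (1 - n1 * (γ t).1) - e1 * (γ t).2 - (-(k1 * n1) - e1 + k1)))
         + e1 * k1 * n1 * (k1 * n1 + e1)
            * ((γ t).2 * (e1 * ((k1 ^ 2 * n1 ^ 2 + 1) / e1 ^ 2) * (γ t).1
                - -(k1 * n1) * (γ t).2 - (k1 ^ 2 * n1 ^ 2 + e1 * k1 * n1 + 1) / e1)))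
          * (γ t).1 ^ (n1 * k1 * (k1 ^ 2 * n1 ^ 2 + e1 * k1 * n1 + 1) / e1)
        + (n1 * k1 * (k1 ^ 2 * n1 ^ 2 + e1 * k1 * n1 + 1) * (γ t).1
            + e1 * k1 * n1 * (k1 * n1 + e1) * (γ t).2
            - (k1 * n1 + e1) * (k1 ^ 2 * n1 ^ 2 + e1 * k1 * n1 + 1))
          * (((γ t).1 * (k1 * (1 - n1 * (γ t).1) - e1 * (γ t).2 - (-(k1 * n1) - e1 + k1)))
            * (n1 * k1 * (k1 ^ 2 * n1 ^ 2 + e1 * k1 * n1 + 1) / e1)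
            * ((γ t).1 ^ (n1 * k1 * (k1 ^ 2 * n1 ^ 2 + e1 * k1 * n1 + 1) / e1) / (γ t).1)))
        * (γ t).2 ^ (k1 * n1 * (k1 * n1 + e1))
      + (n1 * k1 * (k1 ^ 2 * n1 ^ 2 + e1 * k1 * n1 + 1) * (γ t).1
            + e1 * k1 * n1 * (k1 * n1 + e1) * (γ t).2
            - (k1 * n1 + e1) * (k1 ^ 2 * n1 ^ 2 + e1 * k1 * n1 + 1))
          * (γ t).1 ^ (n1 * k1 * (k1 ^ 2 * n1 ^ 2 + e1 * k1 * n1 + 1) / e1)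
        * (((γ t).2 * (e1 * ((k1 ^ 2 * n1 ^ 2 + 1) / e1 ^ 2) * (γ t).1
              - -(k1 * n1) * (γ t).2 - (k1 ^ 2 * n1 ^ 2 + e1 * k1 * n1 + 1) / e1))
          * (k1 * n1 * (k1 * n1 + e1))
          * ((γ t).2 ^ (k1 * n1 * (k1 * n1 + e1)) / (γ t).2)) = 0 := by
      field_simp
      ring
    simp only [Pi.mul_apply] at hmain
    rw [hzero] at hmain
    exact hmain
  intro t₁ h₁ t₂ h₂
  rcases le_total t₁ t₂ with hle | hle
  · exact const_on_Ioo h₁ h₂ hle hd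
  · exact (const_on_Ioo h₂ h₁ hle hd).symm
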